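/- Let 𝒜₁ = (1/2)e^{τ}|z_τ + e^{−τ}z_θ|_D² and 𝒜₂ = (1/2)e^{τ}|z_τ − e^{−τ}z_θ|_D². Then at every point, (∂_τ − e^{−τ}∂_θ)𝒜₁ = (∂_τ + e^{−τ}∂_θ)𝒜₂ = (1/2)e^{τ}[|z_τ|_D² − e^{−2τ}|z_θ|_D²]. -/

import Mathlib

open Real

/-- Partial derivative with respect to the first (time) variable `τ`,
for complex-valued functions. -/
noncomputable def cdt (f : ℝ → ℝ → ℂ) : ℝ → ℝ → ℂ := fun τ θ => deriv (fun s => f s θ) τ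

/-- Partial derivative with respect to the second (spatial) variable `θ`,
for complex-valued functions. -/
noncomputable def cdθ (f : ℝ → ℝ → ℂ) : ℝ → ℝ → ℂ := fun τ θ => deriv (fun x => f τ x) θ

/-- Partial derivative with respect to the first (time) variable `τ`,
for real-valued functions. -/
noncomputable def rdt (f : ℝ → ℝ → ℝ) : ℝ → ℝ → ℝ := fun τ θ => deriv (fun s => f s θ) τ

/-- Partial derivative with respect to the second (spatial) variable `θ`,
for real-valued functions. -/
noncomputable def rdθ (f : ℝ → ℝ → ℝ) : ℝ → ℝ → ℝ := fun τ θ => deriv (fun x => f τ x) θ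

/-- Smoothness of a complex-valued function of two real variables. -/
def SmoothC (f : ℝ → ℝ → ℂ) : Prop := ContDiff ℝ (⊤ : ℕ∞) (Function.uncurry f)

/-- 2π-periodicity in the second (spatial) variable. -/
def PeriodicC (f : ℝ → ℝ → ℂ) : Prop := ∀ τ θ, f τ (θ + 2 * π) = f τ θ

/-- The map takes values in the open unit disc. -/
def InDisc (f : ℝ → ℝ → ℂ) : Prop := ∀ τ θ, ‖f τ θ‖ < 1

/-- `|w|_D²` with respect to the base point `z τ θ` of the disc model. -/
noncomputable def normD2 (z : ℝ → ℝ → ℂ) (τ θ : ℝ) (w : ℂ) : ℝ :=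
  4 * ‖w‖ ^ 2 / (1 - ‖z τ θ‖ ^ 2) ^ 2

/-- The hyperbolic distance `ρ` from the origin to `z τ θ` in the disc model. -/
noncomputable def rho (z : ℝ → ℝ → ℂ) : ℝ → ℝ → ℝ := fun τ θ =>
  Real.log ((1 + ‖z τ θ‖) / (1 - ‖z τ θ‖))

/-- The function `(z/|z|)·ρ`, viewed as a complex (i.e. ℝ²-valued) function;
in Lean, division by zero gives `0`, which agrees with the extension by `0` at `z = 0`. -/
noncomputable def gfun (z : ℝ → ℝ → ℂ) (τ θ : ℝ) : ℂ :=
  (z τ θ / (‖z τ θ‖ : ℂ)) * (rho z τ θ : ℂ)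

/-- The wave map equation in the disc model. -/
def DiscWaveMap (z : ℝ → ℝ → ℂ) : Prop :=
  ∀ τ θ : ℝ,
    cdt (fun s x => cdt z s x / ((1 - ‖z s x‖ ^ 2 : ℝ) : ℂ) ^ 2) τ θ -
      (Real.exp (-2 * τ) : ℂ) *
        cdθ (fun s x => cdθ z s x / ((1 - ‖z s x‖ ^ 2 : ℝ) : ℂ) ^ 2) τ θ =
    2 * z τ θ *
      ((‖cdt z τ θ‖ ^ 2 - Real.exp (-2 * τ) * ‖cdθ z τ θ‖ ^ 2 : ℝ) : ℂ) /
      ((1 - ‖z τ θ‖ ^ 2 : ℝ) : ℂ) ^ 3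

/-- `𝒜₁ = (1/2)e^τ |z_τ + e^{-τ}z_θ|_D²`. -/
noncomputable def A1fun (z : ℝ → ℝ → ℂ) : ℝ → ℝ → ℝ := fun τ θ =>
  (1 / 2) * Real.exp τ * normD2 z τ θ (cdt z τ θ + (Real.exp (-τ) : ℂ) * cdθ z τ θ)

/-- `𝒜₂ = (1/2)e^τ |z_τ - e^{-τ}z_θ|_D²`. -/
noncomputable def A2fun (z : ℝ → ℝ → ℂ) : ℝ → ℝ → ℝ := fun τ θ =>
  (1 / 2) * Real.exp τ * normD2 z τ θ (cdt z τ θ - (Real.exp (-τ) : ℂ) * cdθ z τ θ)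

lemma cdt_eq_fderiv {f : ℝ → ℝ → ℂ} (hf : SmoothC f) :
    cdt f = fun τ θ => fderiv ℝ (Function.uncurry f) (τ, θ) (1, 0) := by
  funext τ θ
  have hγ : HasDerivAt (fun s : ℝ => ((s, θ) : ℝ × ℝ)) ((1 : ℝ), (0 : ℝ)) τ :=
    (hasDerivAt_id τ).prodMk (hasDerivAt_const τ θ)
  have hF : HasFDerivAt (Function.uncurry f) (fderiv ℝ (Function.uncurry f) (τ, θ)) (τ, θ) :=
    ((hf.differentiable (by norm_cast)) (τ, θ)).hasFDerivAt
  exact (hF.comp_hasDerivAt τ hγ).deriv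

lemma cdθ_eq_fderiv {f : ℝ → ℝ → ℂ} (hf : SmoothC f) :
    cdθ f = fun τ θ => fderiv ℝ (Function.uncurry f) (τ, θ) (0, 1) := by
  funext τ θ
  have hγ : HasDerivAt (fun x : ℝ => ((τ, x) : ℝ × ℝ)) ((0 : ℝ), (1 : ℝ)) θ :=
    (hasDerivAt_const θ τ).prodMk (hasDerivAt_id θ)
  have hF : HasFDerivAt (Function.uncurry f) (fderiv ℝ (Function.uncurry f) (τ, θ)) (τ, θ) :=
    ((hf.differentiable (by norm_cast)) (τ, θ)).hasFDerivAt
  exact (hF.comp_hasDerivAt θ hγ).deriv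

lemma smoothC_apply_fderiv {f : ℝ → ℝ → ℂ} (hf : SmoothC f) (v : ℝ × ℝ) :
    SmoothC (fun τ θ => fderiv ℝ (Function.uncurry f) (τ, θ) v) := by
  have h1 : ContDiff ℝ (⊤ : ℕ∞) (fderiv ℝ (Function.uncurry f)) :=
    hf.fderiv_right (by norm_cast)
  have h2 := (ContinuousLinearMap.apply ℝ ℂ v).contDiff.comp h1
  exact h2

lemma smoothC_cdt {f : ℝ → ℝ → ℂ} (hf : SmoothC f) : SmoothC (cdt f) := by
  rw [cdt_eq_fderiv hf]; exact smoothC_apply_fderiv hf _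

lemma smoothC_cdθ {f : ℝ → ℝ → ℂ} (hf : SmoothC f) : SmoothC (cdθ f) := by
  rw [cdθ_eq_fderiv hf]; exact smoothC_apply_fderiv hf _

lemma hasDerivAt_cdt {f : ℝ → ℝ → ℂ} (hf : SmoothC f) (τ θ : ℝ) :
    HasDerivAt (fun s => f s θ) (cdt f τ θ) τ := by
  have : DifferentiableAt ℝ (fun s => f s θ) τ := by
    have := (hf.differentiable (by norm_cast)).comp
      ((differentiable_id.prodMk (differentiable_const θ)) : Differentiable ℝ (fun s : ℝ => ((s, θ) : ℝ × ℝ)))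
    exact this τ
  exact this.hasDerivAt

lemma hasDerivAt_cdθ {f : ℝ → ℝ → ℂ} (hf : SmoothC f) (τ θ : ℝ) :
    HasDerivAt (fun x => f τ x) (cdθ f τ θ) θ := by
  have : DifferentiableAt ℝ (fun x => f τ x) θ := by
    have := (hf.differentiable (by norm_cast)).comp
      (((differentiable_const τ).prodMk differentiable_id) : Differentiable ℝ (fun x : ℝ => ((τ, x) : ℝ × ℝ)))
    exact this θ
  exact this.hasDerivAt

lemma clairaut {f : ℝ → ℝ → ℂ} (hf : SmoothC f) (τ θ : ℝ) :
    cdt (cdθ f) τ θ = cdθ (cdt f) τ θ := by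
  have hsym : IsSymmSndFDerivAt ℝ (Function.uncurry f) (τ, θ) :=
    hf.contDiffAt.isSymmSndFDerivAt (by simp [minSmoothness_of_isRCLikeNormedField]; norm_cast)
  have h1 : ContDiff ℝ (⊤ : ℕ∞) (fderiv ℝ (Function.uncurry f)) := hf.fderiv_right (by norm_cast)
  have hG : HasFDerivAt (fderiv ℝ (Function.uncurry f))
      (fderiv ℝ (fderiv ℝ (Function.uncurry f)) (τ, θ)) (τ, θ) :=
    ((h1.differentiable (by norm_cast)) (τ, θ)).hasFDerivAt
  have hγt : HasDerivAt (fun s : ℝ => ((s, θ) : ℝ × ℝ)) ((1 : ℝ), (0 : ℝ)) τ :=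
    (hasDerivAt_id τ).prodMk (hasDerivAt_const τ θ)
  have hγθ : HasDerivAt (fun x : ℝ => ((τ, x) : ℝ × ℝ)) ((0 : ℝ), (1 : ℝ)) θ :=
    (hasDerivAt_const θ τ).prodMk (hasDerivAt_id θ)
  have e1 : cdt (cdθ f) τ θ
      = fderiv ℝ (fderiv ℝ (Function.uncurry f)) (τ, θ) ((1:ℝ), (0:ℝ)) ((0:ℝ), (1:ℝ)) := by
    rw [cdθ_eq_fderiv hf]
    exact (((ContinuousLinearMap.apply ℝ ℂ ((0:ℝ), (1:ℝ))).hasFDerivAt).comp_hasDerivAt τ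
      (hG.comp_hasDerivAt τ hγt)).deriv
  have e2 : cdθ (cdt f) τ θ
      = fderiv ℝ (fderiv ℝ (Function.uncurry f)) (τ, θ) ((0:ℝ), (1:ℝ)) ((1:ℝ), (0:ℝ)) := by
    rw [cdt_eq_fderiv hf]
    exact (((ContinuousLinearMap.apply ℝ ℂ ((1:ℝ), (0:ℝ))).hasFDerivAt).comp_hasDerivAt θ
      (hG.comp_hasDerivAt θ hγθ)).deriv
  rw [e1, e2, hsym.eq]

lemma HasDerivAt.cnormSq {W : ℝ → ℂ} {w' : ℂ} {t : ℝ} (h : HasDerivAt W w' t) :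
    HasDerivAt (fun s => Complex.normSq (W s))
      (2 * ((W t).re * w'.re + (W t).im * w'.im)) t := by
  have hre : HasDerivAt (fun s => (W s).re) w'.re t :=
    (Complex.reCLM.hasFDerivAt.comp_hasDerivAt t h)
  have him : HasDerivAt (fun s => (W s).im) w'.im t :=
    (Complex.imCLM.hasFDerivAt.comp_hasDerivAt t h)
  have := (hre.mul hre).add (him.mul him)
  simp only [Complex.normSq_apply]
  exact this.congr_deriv (by ring)

lemma HasDerivAt.cofReal {u : ℝ → ℝ} {u' : ℝ} {t : ℝ} (h : HasDerivAt u u' t) :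
    HasDerivAt (fun s => ((u s : ℝ) : ℂ)) ((u' : ℝ) : ℂ) t :=
  Complex.ofRealCLM.hasFDerivAt.comp_hasDerivAt t h

/-- The identity (34) of the paper:
`(∂_τ - e^{-τ}∂_θ)𝒜₁ = (∂_τ + e^{-τ}∂_θ)𝒜₂ = (1/2)e^τ[|z_τ|_D² - e^{-2τ}|z_θ|_D²]`. -/
theorem stmt_13 (z : ℝ → ℝ → ℂ) (hzs : SmoothC z) (hzp : PeriodicC z)
    (hzD : InDisc z) (hwm : DiscWaveMap z) (τ θ : ℝ) :
    rdt (A1fun z) τ θ - Real.exp (-τ) * rdθ (A1fun z) τ θ =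
      (1 / 2) * Real.exp τ *
        (normD2 z τ θ (cdt z τ θ) - Real.exp (-2 * τ) * normD2 z τ θ (cdθ z τ θ)) ∧
    rdt (A2fun z) τ θ + Real.exp (-τ) * rdθ (A2fun z) τ θ =
      (1 / 2) * Real.exp τ *
        (normD2 z τ θ (cdt z τ θ) - Real.exp (-2 * τ) * normD2 z τ θ (cdθ z τ θ)) := by
  have hU : SmoothC (cdt z) := smoothC_cdt hzs
  have hV : SmoothC (cdθ z) := smoothC_cdθ hzs
  have hcl := clairaut hzs τ θ
  set Z : ℂ := z τ θ with hZdef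
  set u : ℂ := cdt z τ θ with hudef
  set v : ℂ := cdθ z τ θ with hvdef
  set p : ℂ := cdt (cdt z) τ θ with hpdef
  set q : ℂ := cdθ (cdt z) τ θ with hqdef
  set r : ℂ := cdθ (cdθ z) τ θ with hrdef
  set a : ℝ := Z.re * u.re + Z.im * u.im with hadef
  set b : ℝ := Z.re * v.re + Z.im * v.im with hbdef
  have hz1 : HasDerivAt (fun s => z s θ) u τ := hasDerivAt_cdt hzs τ θ
  have hu1 : HasDerivAt (fun s => cdt z s θ) p τ := hasDerivAt_cdt hU τ θ
  have hv1 : HasDerivAt (fun s => cdθ z s θ) q τ := by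
    rw [← hcl]; exact hasDerivAt_cdt hV τ θ
  have hz2 : HasDerivAt (fun x => z τ x) v θ := hasDerivAt_cdθ hzs τ θ
  have hu2 : HasDerivAt (fun x => cdt z τ x) q θ := hasDerivAt_cdθ hU τ θ
  have hv2 : HasDerivAt (fun x => cdθ z τ x) r θ := hasDerivAt_cdθ hV τ θ
  have habs : ‖Z‖ < 1 := hzD τ θ
  have hDpos : 0 < 1 - Complex.normSq Z := by
    rw [← Complex.sq_norm]
    nlinarith [norm_nonneg Z]
  have hDne : (1 - Complex.normSq Z) ≠ 0 := ne_of_gt hDpos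
  -- derivatives of the conformal factor
  have hn1 : HasDerivAt (fun s => Complex.normSq (z s θ)) (2 * a) τ := hz1.cnormSq
  have hd1 : HasDerivAt (fun s => 1 - Complex.normSq (z s θ)) (-(2 * a)) τ := by
    simpa using hn1.const_sub 1
  have hd1sq : HasDerivAt (fun s => (1 - Complex.normSq (z s θ)) ^ 2)
      (2 * (1 - Complex.normSq Z) * (-(2 * a))) τ := by
    have := hd1.pow 2
    norm_num at this
    exact this.congr_deriv (by ring)
  have hn2 : HasDerivAt (fun x => Complex.normSq (z τ x)) (2 * b) θ := hz2.cnormSq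
  have hd2 : HasDerivAt (fun x => 1 - Complex.normSq (z τ x)) (-(2 * b)) θ := by
    simpa using hn2.const_sub 1
  have hd2sq : HasDerivAt (fun x => (1 - Complex.normSq (z τ x)) ^ 2)
      (2 * (1 - Complex.normSq Z) * (-(2 * b))) θ := by
    have := hd2.pow 2
    norm_num at this
    exact this.congr_deriv (by ring)
  have hEs : HasDerivAt (fun s : ℝ => Real.exp (-s)) (-Real.exp (-τ)) τ := by
    have h := (Real.hasDerivAt_exp (-τ)).comp τ ((hasDerivAt_id τ).neg)
    simpa [Function.comp_def] using h
  set W1 : ℂ := u + ((Real.exp (-τ) : ℝ) : ℂ) * v with hW1def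
  set W2 : ℂ := u - ((Real.exp (-τ) : ℝ) : ℂ) * v with hW2def
  set P1 : ℂ := p + (((-Real.exp (-τ) : ℝ) : ℂ) * v + ((Real.exp (-τ) : ℝ) : ℂ) * q) with hP1def
  set P2 : ℂ := p - (((-Real.exp (-τ) : ℝ) : ℂ) * v + ((Real.exp (-τ) : ℝ) : ℂ) * q) with hP2def
  set Q1 : ℂ := q + ((Real.exp (-τ) : ℝ) : ℂ) * r with hQ1def
  set Q2 : ℂ := q - ((Real.exp (-τ) : ℝ) : ℂ) * r with hQ2def
  -- time derivative of W-type quantities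
  have hW1t : HasDerivAt (fun s => cdt z s θ + ((Real.exp (-s) : ℝ) : ℂ) * cdθ z s θ) P1 τ :=
    hu1.add (hEs.cofReal.mul hv1)
  have hW2t : HasDerivAt (fun s => cdt z s θ - ((Real.exp (-s) : ℝ) : ℂ) * cdθ z s θ) P2 τ :=
    hu1.sub (hEs.cofReal.mul hv1)
  have hW1x : HasDerivAt (fun x => cdt z τ x + ((Real.exp (-τ) : ℝ) : ℂ) * cdθ z τ x) Q1 θ :=
    hu2.add (hv2.const_mul _)
  have hW2x : HasDerivAt (fun x => cdt z τ x - ((Real.exp (-τ) : ℝ) : ℂ) * cdθ z τ x) Q2 θ :=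
    hu2.sub (hv2.const_mul _)
  -- numerators
  have hM1t : HasDerivAt
      (fun s => Complex.normSq (cdt z s θ + ((Real.exp (-s) : ℝ) : ℂ) * cdθ z s θ))
      (2 * (W1.re * P1.re + W1.im * P1.im)) τ := hW1t.cnormSq
  have hM2t : HasDerivAt
      (fun s => Complex.normSq (cdt z s θ - ((Real.exp (-s) : ℝ) : ℂ) * cdθ z s θ))
      (2 * (W2.re * P2.re + W2.im * P2.im)) τ := hW2t.cnormSq
  have hM1x : HasDerivAt
      (fun x => Complex.normSq (cdt z τ x + ((Real.exp (-τ) : ℝ) : ℂ) * cdθ z τ x))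
      (2 * (W1.re * Q1.re + W1.im * Q1.im)) θ := hW1x.cnormSq
  have hM2x : HasDerivAt
      (fun x => Complex.normSq (cdt z τ x - ((Real.exp (-τ) : ℝ) : ℂ) * cdθ z τ x))
      (2 * (W2.re * Q2.re + W2.im * Q2.im)) θ := hW2x.cnormSq
  have hN1t : HasDerivAt
      (fun s => 2 * Real.exp s *
        Complex.normSq (cdt z s θ + ((Real.exp (-s) : ℝ) : ℂ) * cdθ z s θ))
      (2 * Real.exp τ * Complex.normSq W1 +
        2 * Real.exp τ * (2 * (W1.re * P1.re + W1.im * P1.im))) τ :=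
    ((Real.hasDerivAt_exp τ).const_mul 2).mul hM1t
  have hN2t : HasDerivAt
      (fun s => 2 * Real.exp s *
        Complex.normSq (cdt z s θ - ((Real.exp (-s) : ℝ) : ℂ) * cdθ z s θ))
      (2 * Real.exp τ * Complex.normSq W2 +
        2 * Real.exp τ * (2 * (W2.re * P2.re + W2.im * P2.im))) τ :=
    ((Real.hasDerivAt_exp τ).const_mul 2).mul hM2t
  have hN1x : HasDerivAt
      (fun x => 2 * Real.exp τ *
        Complex.normSq (cdt z τ x + ((Real.exp (-τ) : ℝ) : ℂ) * cdθ z τ x))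
      (2 * Real.exp τ * (2 * (W1.re * Q1.re + W1.im * Q1.im))) θ :=
    hM1x.const_mul _
  have hN2x : HasDerivAt
      (fun x => 2 * Real.exp τ *
        Complex.normSq (cdt z τ x - ((Real.exp (-τ) : ℝ) : ℂ) * cdθ z τ x))
      (2 * Real.exp τ * (2 * (W2.re * Q2.re + W2.im * Q2.im))) θ :=
    hM2x.const_mul _
  -- the four derivative values
  have hA1t : HasDerivAt
      (fun s => 2 * Real.exp s *
          Complex.normSq (cdt z s θ + ((Real.exp (-s) : ℝ) : ℂ) * cdθ z s θ) /
        (1 - Complex.normSq (z s θ)) ^ 2)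
      (((2 * Real.exp τ * Complex.normSq W1 +
          2 * Real.exp τ * (2 * (W1.re * P1.re + W1.im * P1.im))) *
            (1 - Complex.normSq Z) ^ 2 -
          2 * Real.exp τ * Complex.normSq W1 *
            (2 * (1 - Complex.normSq Z) * (-(2 * a)))) /
        ((1 - Complex.normSq Z) ^ 2) ^ 2) τ :=
    hN1t.div hd1sq (pow_ne_zero 2 hDne)
  have hA2t : HasDerivAt
      (fun s => 2 * Real.exp s *
          Complex.normSq (cdt z s θ - ((Real.exp (-s) : ℝ) : ℂ) * cdθ z s θ) /
        (1 - Complex.normSq (z s θ)) ^ 2)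
      (((2 * Real.exp τ * Complex.normSq W2 +
          2 * Real.exp τ * (2 * (W2.re * P2.re + W2.im * P2.im))) *
            (1 - Complex.normSq Z) ^ 2 -
          2 * Real.exp τ * Complex.normSq W2 *
            (2 * (1 - Complex.normSq Z) * (-(2 * a)))) /
        ((1 - Complex.normSq Z) ^ 2) ^ 2) τ :=
    hN2t.div hd1sq (pow_ne_zero 2 hDne)
  have hA1x : HasDerivAt
      (fun x => 2 * Real.exp τ *
          Complex.normSq (cdt z τ x + ((Real.exp (-τ) : ℝ) : ℂ) * cdθ z τ x) /
        (1 - Complex.normSq (z τ x)) ^ 2)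
      ((2 * Real.exp τ * (2 * (W1.re * Q1.re + W1.im * Q1.im)) *
            (1 - Complex.normSq Z) ^ 2 -
          2 * Real.exp τ * Complex.normSq W1 *
            (2 * (1 - Complex.normSq Z) * (-(2 * b)))) /
        ((1 - Complex.normSq Z) ^ 2) ^ 2) θ :=
    hN1x.div hd2sq (pow_ne_zero 2 hDne)
  have hA2x : HasDerivAt
      (fun x => 2 * Real.exp τ *
          Complex.normSq (cdt z τ x - ((Real.exp (-τ) : ℝ) : ℂ) * cdθ z τ x) /
        (1 - Complex.normSq (z τ x)) ^ 2)
      ((2 * Real.exp τ * (2 * (W2.re * Q2.re + W2.im * Q2.im)) *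
            (1 - Complex.normSq Z) ^ 2 -
          2 * Real.exp τ * Complex.normSq W2 *
            (2 * (1 - Complex.normSq Z) * (-(2 * b)))) /
        ((1 - Complex.normSq Z) ^ 2) ^ 2) θ :=
    hN2x.div hd2sq (pow_ne_zero 2 hDne)
  -- relate to rdt/rdθ of A1fun, A2fun
  have hfunA1t : (fun s => A1fun z s θ) = (fun s => 2 * Real.exp s *
      Complex.normSq (cdt z s θ + ((Real.exp (-s) : ℝ) : ℂ) * cdθ z s θ) /
      (1 - Complex.normSq (z s θ)) ^ 2) := by
    funext s
    simp only [A1fun, normD2, Complex.sq_norm]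
    ring
  have hfunA2t : (fun s => A2fun z s θ) = (fun s => 2 * Real.exp s *
      Complex.normSq (cdt z s θ - ((Real.exp (-s) : ℝ) : ℂ) * cdθ z s θ) /
      (1 - Complex.normSq (z s θ)) ^ 2) := by
    funext s
    simp only [A2fun, normD2, Complex.sq_norm]
    ring
  have hfunA1x : (fun x => A1fun z τ x) = (fun x => 2 * Real.exp τ *
      Complex.normSq (cdt z τ x + ((Real.exp (-τ) : ℝ) : ℂ) * cdθ z τ x) /
      (1 - Complex.normSq (z τ x)) ^ 2) := by
    funext x
    simp only [A1fun, normD2, Complex.sq_norm]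
    ring
  have hfunA2x : (fun x => A2fun z τ x) = (fun x => 2 * Real.exp τ *
      Complex.normSq (cdt z τ x - ((Real.exp (-τ) : ℝ) : ℂ) * cdθ z τ x) /
      (1 - Complex.normSq (z τ x)) ^ 2) := by
    funext x
    simp only [A2fun, normD2, Complex.sq_norm]
    ring
  have hrdtA1 : rdt (A1fun z) τ θ =
      ((2 * Real.exp τ * Complex.normSq W1 +
          2 * Real.exp τ * (2 * (W1.re * P1.re + W1.im * P1.im))) *
            (1 - Complex.normSq Z) ^ 2 -
          2 * Real.exp τ * Complex.normSq W1 *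
            (2 * (1 - Complex.normSq Z) * (-(2 * a)))) /
        ((1 - Complex.normSq Z) ^ 2) ^ 2 := by
    show deriv (fun s => A1fun z s θ) τ = _
    rw [hfunA1t]; exact hA1t.deriv
  have hrdtA2 : rdt (A2fun z) τ θ =
      ((2 * Real.exp τ * Complex.normSq W2 +
          2 * Real.exp τ * (2 * (W2.re * P2.re + W2.im * P2.im))) *
            (1 - Complex.normSq Z) ^ 2 -
          2 * Real.exp τ * Complex.normSq W2 *
            (2 * (1 - Complex.normSq Z) * (-(2 * a)))) /
        ((1 - Complex.normSq Z) ^ 2) ^ 2 := by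
    show deriv (fun s => A2fun z s θ) τ = _
    rw [hfunA2t]; exact hA2t.deriv
  have hrdxA1 : rdθ (A1fun z) τ θ =
      (2 * Real.exp τ * (2 * (W1.re * Q1.re + W1.im * Q1.im)) *
            (1 - Complex.normSq Z) ^ 2 -
          2 * Real.exp τ * Complex.normSq W1 *
            (2 * (1 - Complex.normSq Z) * (-(2 * b)))) /
        ((1 - Complex.normSq Z) ^ 2) ^ 2 := by
    show deriv (fun x => A1fun z τ x) θ = _
    rw [hfunA1x]; exact hA1x.deriv
  have hrdxA2 : rdθ (A2fun z) τ θ =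
      (2 * Real.exp τ * (2 * (W2.re * Q2.re + W2.im * Q2.im)) *
            (1 - Complex.normSq Z) ^ 2 -
          2 * Real.exp τ * Complex.normSq W2 *
            (2 * (1 - Complex.normSq Z) * (-(2 * b)))) /
        ((1 - Complex.normSq Z) ^ 2) ^ 2 := by
    show deriv (fun x => A2fun z τ x) θ = _
    rw [hfunA2x]; exact hA2x.deriv
  -- unpack the wave map equation
  have hDcne : ((1 - Complex.normSq Z : ℝ) : ℂ) ≠ 0 := Complex.ofReal_ne_zero.mpr hDne
  have hdc1 : HasDerivAt (fun s => ((1 - Complex.normSq (z s θ) : ℝ) : ℂ))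
      (((-(2 * a) : ℝ)) : ℂ) τ := hd1.cofReal
  have hdc2 : HasDerivAt (fun x => ((1 - Complex.normSq (z τ x) : ℝ) : ℂ))
      (((-(2 * b) : ℝ)) : ℂ) θ := hd2.cofReal
  have hdc1sq : HasDerivAt (fun s => ((1 - Complex.normSq (z s θ) : ℝ) : ℂ) ^ 2)
      (2 * ((1 - Complex.normSq Z : ℝ) : ℂ) * (((-(2 * a) : ℝ)) : ℂ)) τ := by
    have h := hdc1.mul hdc1
    rw [show (fun s => ((1 - Complex.normSq (z s θ) : ℝ) : ℂ) ^ 2)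
        = (fun s => ((1 - Complex.normSq (z s θ) : ℝ) : ℂ) *
            ((1 - Complex.normSq (z s θ) : ℝ) : ℂ)) from funext fun s => pow_two _]
    exact h.congr_deriv (by ring)
  have hdc2sq : HasDerivAt (fun x => ((1 - Complex.normSq (z τ x) : ℝ) : ℂ) ^ 2)
      (2 * ((1 - Complex.normSq Z : ℝ) : ℂ) * (((-(2 * b) : ℝ)) : ℂ)) θ := by
    have h := hdc2.mul hdc2
    rw [show (fun x => ((1 - Complex.normSq (z τ x) : ℝ) : ℂ) ^ 2)
        = (fun x => ((1 - Complex.normSq (z τ x) : ℝ) : ℂ) *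
            ((1 - Complex.normSq (z τ x) : ℝ) : ℂ)) from funext fun x => pow_two _]
    exact h.congr_deriv (by ring)
  have hq1 : HasDerivAt (fun s => cdt z s θ / ((1 - Complex.normSq (z s θ) : ℝ) : ℂ) ^ 2)
      ((p * ((1 - Complex.normSq Z : ℝ) : ℂ) ^ 2 -
          u * (2 * ((1 - Complex.normSq Z : ℝ) : ℂ) * (((-(2 * a) : ℝ)) : ℂ))) /
        (((1 - Complex.normSq Z : ℝ) : ℂ) ^ 2) ^ 2) τ :=
    hu1.div hdc1sq (pow_ne_zero 2 hDcne)
  have hq2 : HasDerivAt (fun x => cdθ z τ x / ((1 - Complex.normSq (z τ x) : ℝ) : ℂ) ^ 2)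
      ((r * ((1 - Complex.normSq Z : ℝ) : ℂ) ^ 2 -
          v * (2 * ((1 - Complex.normSq Z : ℝ) : ℂ) * (((-(2 * b) : ℝ)) : ℂ))) /
        (((1 - Complex.normSq Z : ℝ) : ℂ) ^ 2) ^ 2) θ :=
    hv2.div hdc2sq (pow_ne_zero 2 hDcne)
  have hwm1 : cdt (fun s x => cdt z s x / ((1 - ‖z s x‖ ^ 2 : ℝ) : ℂ) ^ 2) τ θ =
      (p * ((1 - Complex.normSq Z : ℝ) : ℂ) ^ 2 -
          u * (2 * ((1 - Complex.normSq Z : ℝ) : ℂ) * (((-(2 * a) : ℝ)) : ℂ))) /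
        (((1 - Complex.normSq Z : ℝ) : ℂ) ^ 2) ^ 2 := by
    show deriv (fun s => cdt z s θ / ((1 - ‖z s θ‖ ^ 2 : ℝ) : ℂ) ^ 2) τ = _
    rw [show (fun s => cdt z s θ / ((1 - ‖z s θ‖ ^ 2 : ℝ) : ℂ) ^ 2)
        = (fun s => cdt z s θ / ((1 - Complex.normSq (z s θ) : ℝ) : ℂ) ^ 2) from
      funext fun s => by rw [Complex.sq_norm]]
    exact hq1.deriv
  have hwm2 : cdθ (fun s x => cdθ z s x / ((1 - ‖z s x‖ ^ 2 : ℝ) : ℂ) ^ 2) τ θ =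
      (r * ((1 - Complex.normSq Z : ℝ) : ℂ) ^ 2 -
          v * (2 * ((1 - Complex.normSq Z : ℝ) : ℂ) * (((-(2 * b) : ℝ)) : ℂ))) /
        (((1 - Complex.normSq Z : ℝ) : ℂ) ^ 2) ^ 2 := by
    show deriv (fun x => cdθ z τ x / ((1 - ‖z τ x‖ ^ 2 : ℝ) : ℂ) ^ 2) θ = _
    rw [show (fun x => cdθ z τ x / ((1 - ‖z τ x‖ ^ 2 : ℝ) : ℂ) ^ 2)
        = (fun x => cdθ z τ x / ((1 - Complex.normSq (z τ x) : ℝ) : ℂ) ^ 2) from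
      funext fun x => by rw [Complex.sq_norm]]
    exact hq2.deriv
  have hexp2 : Real.exp (-2 * τ) = Real.exp (-τ) * Real.exp (-τ) := by
    rw [← Real.exp_add]; ring_nf
  have hwmEq := hwm τ θ
  rw [hwm1, hwm2, hexp2] at hwmEq
  simp only [Complex.sq_norm, ← hudef, ← hvdef, ← hZdef] at hwmEq
  have hDcne' : ((1:ℂ) - (Complex.normSq Z : ℂ)) ≠ 0 := by
    rw [show ((1:ℂ) - (Complex.normSq Z : ℂ)) = ((1 - Complex.normSq Z : ℝ) : ℂ) by
      push_cast; ring]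
    exact hDcne
  field_simp [hDcne'] at hwmEq
  simp only [Complex.ofReal_sub, Complex.ofReal_one, Complex.ofReal_neg, Complex.ofReal_mul,
    Complex.ofReal_pow, Complex.ofReal_ofNat] at hwmEq
  have hP : p * ((1:ℂ) - (Complex.normSq Z : ℂ)) + 4 * (a : ℂ) * u -
      ((Real.exp (-τ) : ℝ) : ℂ) * ((Real.exp (-τ) : ℝ) : ℂ) *
        (r * ((1:ℂ) - (Complex.normSq Z : ℂ)) + 4 * (b : ℂ) * v) =
      2 * Z * ((Complex.normSq u : ℂ) -
        ((Real.exp (-τ) : ℝ) : ℂ) * ((Real.exp (-τ) : ℝ) : ℂ) * (Complex.normSq v : ℂ)) := by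
    apply mul_left_cancel₀ (pow_ne_zero 4 hDcne')
    have hwmEq1 := hwmEq
    linear_combination (1 - (Complex.normSq Z : ℂ)) ^ 4 * hwmEq1
  have hPre := congrArg Complex.re hP
  have hPim := congrArg Complex.im hP
  simp only [Complex.add_re, Complex.sub_re, Complex.mul_re, Complex.mul_im, Complex.add_im,
    Complex.sub_im, Complex.ofReal_re, Complex.ofReal_im, Complex.re_ofNat, Complex.im_ofNat,
    Complex.one_re, Complex.one_im, mul_zero, zero_mul, sub_zero, zero_sub, add_zero, zero_add,
    neg_zero, neg_neg] at hPre hPim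
  set DD : ℝ := 1 - Complex.normSq Z with hDDdef
  rw [show Complex.normSq u = u.re * u.re + u.im * u.im from Complex.normSq_apply u,
    show Complex.normSq v = v.re * v.re + v.im * v.im from Complex.normSq_apply v] at hPre hPim
  constructor
  · rw [hrdtA1, hrdxA1]
    simp only [normD2, Complex.sq_norm]
    rw [hexp2, ← hZdef, ← hDDdef]
    simp only [hW1def, hP1def, hQ1def, Complex.normSq_apply, Complex.add_re, Complex.add_im,
      Complex.sub_re, Complex.sub_im, Complex.mul_re, Complex.mul_im, Complex.neg_re,
      Complex.neg_im, Complex.ofReal_re, Complex.ofReal_im, mul_zero, zero_mul, sub_zero,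
      add_zero, neg_zero, neg_neg, zero_add, zero_sub]
    simp only [hadef, hbdef] at hPre hPim ⊢
    field_simp
    linear_combination (8 * (u.re + Real.exp (-τ) * v.re)) * hPre +
      (8 * (u.im + Real.exp (-τ) * v.im)) * hPim
  · rw [hrdtA2, hrdxA2]
    simp only [normD2, Complex.sq_norm]
    rw [hexp2, ← hZdef, ← hDDdef]
    simp only [hW2def, hP2def, hQ2def, Complex.normSq_apply, Complex.add_re, Complex.add_im,
      Complex.sub_re, Complex.sub_im, Complex.mul_re, Complex.mul_im, Complex.neg_re,
      Complex.neg_im, Complex.ofReal_re, Complex.ofReal_im, mul_zero, zero_mul, sub_zero,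
      add_zero, neg_zero, neg_neg, zero_add, zero_sub]
    simp only [hadef, hbdef] at hPre hPim ⊢
    field_simp
    linear_combination (8 * (u.re - Real.exp (-τ) * v.re)) * hPre +
      (8 * (u.im - Real.exp (-τ) * v.im)) * hPim
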